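/- Let r, s be real with 0 < s, 2s < r, and r + 5s/3 < 1, and suppose (3 + 8s)/9 ≤ r ≤ (3 + 2s)/6. Let x₁ ∈ (1 − 2r + 5s/3, r − s) and x₂ ∈ (1 − r + 2s/3, x₁ + r − s). Then the three points (x₁, x₂), (1 − x₂ − s/3, 1 − x₂ + x₁ − s/3), (x₂ − x₁, 1 − x₁ − s/3) all lie in the closed region D6 = {(y₁, y₂) : s ≤ y₁ ≤ r − s, r ≤ y₂ ≤ 1 − 4s/3}, and F₆ maps each of them cyclically to the next: F₆(x₁, x₂) = (1 − x₂ − s/3, 1 − x₂ + x₁ − s/3), F₆(1 − x₂ − s/3, 1 − x₂ + x₁ − s/3) = (x₂ − x₁, 1 − x₁ − s/3), and F₆(x₂ − x₁, 1 − x₁ − s/3) = (x₁, x₂). Thus there is a two-parameter family of period-3 orbits lying entirely in region 6. -/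

import Mathlib

/-!
The affine map `F6 s` has linear part `(a, b) ↦ (-b, a - b)`, whose eigenvalues are the primitive
cube roots of unity, so `F6 s` has order three: every point of the plane is a period-3 point.
What remains is to check that the three points of the orbit of `(x₁, x₂)` lie in `D6 r s`; each of
the twelve bounds follows from the hypotheses on `x₁, x₂` together with `2 r ≤ 1 + 2 s / 3`.
-/

/-- The affine branch of the return-time map on region 6. -/
noncomputable def F6 (s : ℝ) (p : ℝ × ℝ) : ℝ × ℝ :=
  (1 - p.2 - s/3, 1 - p.2 + p.1 - s/3)

/-- The closed region D6. -/
def D6 (r s : ℝ) : Set (ℝ × ℝ) :=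
  {p | s ≤ p.1 ∧ p.1 ≤ r - s ∧ r ≤ p.2 ∧ p.2 ≤ 1 - 4*s/3}

open Function

theorem F6_F6 (s : ℝ) (p : ℝ × ℝ) : F6 s (F6 s p) = (p.2 - p.1, 1 - p.1 - s/3) := by
  simp only [F6, Prod.mk.injEq]
  constructor <;> ring

theorem isPeriodicPt_F6 (s : ℝ) (p : ℝ × ℝ) : IsPeriodicPt (F6 s) 3 p := by
  show F6 s (F6 s (F6 s p)) = p
  rw [F6_F6]
  simp only [F6]
  ext <;> ring

theorem orbit_F6_subset_D6 {r s : ℝ} {p : ℝ × ℝ} (hr : r ≤ (3 + 2*s)/6)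
    (h₁hi : p.1 < r - s) (h₂lo : 1 - r + 2*s/3 < p.2) (h₂hi : p.2 < p.1 + r - s) :
    p ∈ D6 r s ∧ F6 s p ∈ D6 r s ∧ F6 s (F6 s p) ∈ D6 r s := by
  rw [F6_F6]
  simp only [D6, F6, Set.mem_ofPred_eq]
  refine ⟨⟨?_, ?_, ?_, ?_⟩, ⟨?_, ?_, ?_, ?_⟩, ⟨?_, ?_, ?_, ?_⟩⟩ <;> linarith

theorem neutral_period3_family_in_region6_general (r s x₁ x₂ : ℝ)
    (hhi : r ≤ (3 + 2*s)/6)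
    (hx1hi : x₁ < r - s)
    (hx2lo : 1 - r + 2*s/3 < x₂) (hx2hi : x₂ < x₁ + r - s) :
    (x₁, x₂) ∈ D6 r s ∧
    (1 - x₂ - s/3, 1 - x₂ + x₁ - s/3) ∈ D6 r s ∧
    (x₂ - x₁, 1 - x₁ - s/3) ∈ D6 r s ∧
    F6 s (x₁, x₂) = (1 - x₂ - s/3, 1 - x₂ + x₁ - s/3) ∧
    F6 s (1 - x₂ - s/3, 1 - x₂ + x₁ - s/3) = (x₂ - x₁, 1 - x₁ - s/3) ∧
    F6 s (x₂ - x₁, 1 - x₁ - s/3) = (x₁, x₂) := by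
  obtain ⟨h₀, h₁, h₂⟩ := orbit_F6_subset_D6 (p := (x₁, x₂)) hhi hx1hi hx2lo hx2hi
  have h₃ : F6 s (F6 s (F6 s (x₁, x₂))) = (x₁, x₂) := isPeriodicPt_F6 s (x₁, x₂)
  rw [F6_F6] at h₂
  rw [F6_F6 s (x₁, x₂)] at h₃
  exact ⟨h₀, h₁, h₂, rfl, F6_F6 s (x₁, x₂), h₃⟩

theorem neutral_period3_family_in_region6 (r s x₁ x₂ : ℝ)
    (hs : 0 < s) (hrs : 2*s < r) (h1 : r + 5*s/3 < 1)
    (hlo : (3 + 8*s)/9 ≤ r) (hhi : r ≤ (3 + 2*s)/6)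
    (hx1lo : 1 - 2*r + 5*s/3 < x₁) (hx1hi : x₁ < r - s)
    (hx2lo : 1 - r + 2*s/3 < x₂) (hx2hi : x₂ < x₁ + r - s) :
    (x₁, x₂) ∈ D6 r s ∧
    (1 - x₂ - s/3, 1 - x₂ + x₁ - s/3) ∈ D6 r s ∧
    (x₂ - x₁, 1 - x₁ - s/3) ∈ D6 r s ∧
    F6 s (x₁, x₂) = (1 - x₂ - s/3, 1 - x₂ + x₁ - s/3) ∧
    F6 s (1 - x₂ - s/3, 1 - x₂ + x₁ - s/3) = (x₂ - x₁, 1 - x₁ - s/3) ∧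
    F6 s (x₂ - x₁, 1 - x₁ - s/3) = (x₁, x₂) :=
  neutral_period3_family_in_region6_general r s x₁ x₂ hhi hx1hi hx2lo hx2hi
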